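/- arXiv:2110.02188 — 2 statements merged into one kernel-verified Lean document; each statement's English description precedes it below -/
import Mathlib

section
/- Let u, v ≥ 2 be integers with uv ≠ 4, and define g_{u,v} on sequences in A₂ recursively by: g_{u,v}(⟦q₀⟧) = ⟦q₀⟧; if q₁ < 0 and u ≠ 2, or q₁ < −2 and u = 2, then g_{u,v}(⟦q₀,...,q_r⟧) = ⟦q₀−1,1⟧ ⊕ g_{v,u}(−⟦q₁+1,q₂,...,q_r⟧); if q₁ = −2, r > 1, u = 2, then g_{u,v}(⟦q₀,...,q_r⟧) = ⟦q₀−1,2⟧ ⊕ g_{v,u}(⟦q₂−1,q₃,...,q_r⟧); if q₁ = −2, r = 1, u = 2, then g_{u,v}(⟦q₀,−2⟧) = ⟦q₀−1,2⟧; otherwise g_{u,v}(⟦q₀,...,q_r⟧) = ⟦q₀⟧ ⊕ g_{v,u}(⟦q₁,...,q_r⟧). Then E(g_{u,v}(s)) = E(s) for every s ∈ A₂. -/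
/-- Evaluation of a finite continued fraction `[q₀, q₁, …, q_r]`. -/
def E : List ℤ → ℚ
  | [] => 0
  | [q] => (q : ℚ)
  | q :: l => (q : ℚ) + 1 / E l

/-- Concatenation `⊕` of finite sequences, merging when the second begins with `0`. -/
def oplus (a b : List ℤ) : List ℤ :=
  match b with
  | [] => a
  | p :: ps =>
    if p = 0 then
      match ps with
      | [] => a
      | p1 :: ps' => a.dropLast ++ (a.getLast! + p1) :: ps'
    else a ++ (p :: ps)

/-- No tail continued fraction `[q_i, …, q_r]` (for `0 < i < r`) evaluates to `0`. -/
def TailsNonzero (l : List ℤ) : Prop :=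
  ∀ i, 0 < i → i + 1 < l.length → E (l.drop i) ≠ 0

/-- `[q₀, …, q_r]` is a short continued fraction: `q_i ≥ 1` for `0 < i < r`, `q_r > 1` if `r > 0`. -/
def IsShortCF (l : List ℤ) : Prop :=
  l ≠ [] ∧ (∀ i, 0 < i → i + 1 < l.length → 1 ≤ l.getD i 0) ∧
    (1 < l.length → 1 < l.getD (l.length - 1) 0)

/-- Membership in `A₁`. -/
def memA1 (l : List ℤ) : Prop := IsShortCF l ∧ TailsNonzero l

/-- Membership in `A₂`: all entries after the first have absolute value `> 1`. -/
def memA2 (l : List ℤ) : Prop :=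
  l ≠ [] ∧ (∀ i, 0 < i → i < l.length → 1 < |l.getD i 0|) ∧ TailsNonzero l

/-- The `(u,v)`-divisibility property: `v` divides even-indexed entries, `u` odd-indexed ones. -/
def DivProp (u v : ℤ) (l : List ℤ) : Prop :=
  ∀ i, i < l.length → (if i % 2 = 0 then v else u) ∣ l.getD i 0

/-- The function `f_{u,v} : A₁ → A₂`. -/
def fCF (u v : ℤ) : List ℤ → List ℤ
  | [] => []
  | [q0] => [q0]
  | q0 :: q1 :: rest =>
    if ¬ (v ∣ q0) ∧ q1 = 1 then
      match rest with
      | [] => [q0 + 1]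
      | q2 :: rest' => oplus [q0 + 1] ((fCF v u ((q2 + 1) :: rest')).map (fun x => -x))
    else if ¬ (v ∣ q0) ∧ q1 = 2 then
      match rest with
      | [] => [q0 + 1, -2]
      | q2 :: rest' => oplus [q0 + 1] (fCF v u (-2 :: (q2 + 1) :: rest'))
    else oplus [q0] (fCF v u (q1 :: rest))
termination_by l => l.length
decreasing_by all_goals (simp_all [List.length]; try omega)

/-- The function `g_{u,v} : A₂ → A₁`. -/
def gCF (u v : ℤ) : List ℤ → List ℤ
  | [] => []
  | [q0] => [q0]
  | q0 :: q1 :: rest =>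
    if (q1 < 0 ∧ u ≠ 2) ∨ (q1 < -2 ∧ u = 2) then
      oplus [q0 - 1, 1] ((gCF v u (((q1 + 1) :: rest).map (fun x => -x))))
    else if q1 = -2 ∧ u = 2 then
      match rest with
      | [] => [q0 - 1, 2]
      | q2 :: rest' => oplus [q0 - 1, 2] (gCF v u ((q2 - 1) :: rest'))
    else oplus [q0] (gCF v u (q1 :: rest))
termination_by l => l.length
decreasing_by all_goals (simp_all [List.length]; try omega)

/-!
Each clause of `g` rewrites the head of the continued fraction by an identity of rational
functions: `[q - 1; 1, -(x + 1)] = [q; x]`, `[q - 1; 2, y - 1] = [q; -2, y]` and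
`[q - 1; 2] = [q; -2]`, while `⊕` with a leading `0` merges by `[a; 0, b, …] = [a + b; …]`.
The identities hold unless the tail `x` or `y` is one of `0, ±1, 1/2`; since every entry after
the first has absolute value at least `2`, every tail has absolute value greater than `1`.
-/

-- Also valid for `t = []`, since `1 / 0 = 0` in `ℚ`.
theorem E_cons (a : ℤ) (t : List ℤ) : E (a :: t) = a + 1 / E t := by
  cases t <;> simp [E]

theorem E_append_congr (a : List ℤ) {b c : List ℤ} (h : E b = E c) :
    E (a ++ b) = E (a ++ c) := by
  induction a with
  | nil => exact h
  | cons x a ih => simp only [List.cons_append, E_cons, ih]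

-- For `b = [0]`, where `oplus a b = a`, this relies on `1 / 0 = 0`.
theorem E_oplus {a : List ℤ} (ha : a ≠ []) (b : List ℤ) : E (oplus a b) = E (a ++ b) := by
  obtain ⟨a, x, rfl⟩ := (List.eq_nil_or_concat a).resolve_left ha
  rw [List.concat_eq_append]
  match b with
  | [] => simp [oplus]
  | p :: ps =>
    by_cases hp : p = 0
    · subst hp
      match ps with
      | [] =>
        rw [oplus, if_pos rfl, List.append_assoc]
        exact E_append_congr a (by simp [E_cons, E])
      | p1 :: ps =>
        rw [oplus, if_pos rfl, List.dropLast_concat, List.getLast!_eq_getLast?_getD,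
          List.getLast?_concat, Option.getD_some, List.append_assoc]
        exact E_append_congr a (by
          simp only [List.singleton_append, E_cons, Int.cast_add, Int.cast_zero, zero_add, one_div,
            inv_inv, add_assoc])
    · simp only [oplus, if_neg hp]

theorem E_oplus_singleton (x : ℤ) (b : List ℤ) : E (oplus [x] b) = x + 1 / E b := by
  rw [E_oplus (List.cons_ne_nil _ _), List.singleton_append, E_cons]

theorem E_oplus_pair (x y : ℤ) (b : List ℤ) : E (oplus [x, y] b) = x + 1 / (y + 1 / E b) := by
  rw [E_oplus (List.cons_ne_nil _ _), List.cons_append, List.singleton_append, E_cons, E_cons]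

theorem E_cons_add (a b : ℤ) (t : List ℤ) : E ((a + b) :: t) = E (a :: t) + b := by
  rw [E_cons, E_cons, Int.cast_add, add_right_comm]

theorem E_cons_sub (a b : ℤ) (t : List ℤ) : E ((a - b) :: t) = E (a :: t) - b := by
  rw [E_cons, E_cons, Int.cast_sub, sub_add_eq_add_sub]

theorem E_map_neg (l : List ℤ) : E (l.map (- ·)) = -E l := by
  induction l with
  | nil => simp [E]
  | cons a t ih =>
    rw [List.map_cons, E_cons, E_cons, ih, Int.cast_neg, one_div_neg_eq_neg_one_div, neg_add]

theorem one_lt_abs_E : ∀ {l : List ℤ}, l ≠ [] → (∀ q ∈ l, 2 ≤ |q|) → 1 < |E l|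
  | a :: t, _, h => by
    have ha : (2 : ℚ) ≤ |(a : ℚ)| := by exact_mod_cast h a List.mem_cons_self
    have ht : |1 / E t| < 1 := by
      rcases eq_or_ne t [] with rfl | ht
      · simp [E]
      · have := one_lt_abs_E ht fun q hq => h q (List.mem_cons_of_mem a hq)
        rwa [abs_div, abs_one, div_lt_one (by linarith)]
    rw [E_cons]
    linarith [abs_sub_abs_le_abs_add (a : ℚ) (1 / E t)]

theorem ne_of_one_lt_abs {x c : ℚ} (hx : 1 < |x|) (hc : |c| ≤ 1) : x ≠ c := by
  rintro rfl
  linarith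

theorem cf_sub_one_one_neg_eq {x : ℚ} (hx : 1 < |x|) (q : ℚ) :
    q - 1 + 1 / (1 + 1 / -(x + 1)) = q + 1 / x := by
  have hx0 : x ≠ 0 := ne_of_one_lt_abs hx (by norm_num)
  have hx1 : x + 1 ≠ 0 := add_eq_zero_iff_eq_neg.not.mpr (ne_of_one_lt_abs hx (by norm_num))
  have h : (1 : ℚ) + 1 / -(x + 1) = x / (x + 1) := by field_simp; ring
  rw [h, one_div_div, add_div, div_self hx0]
  ring

theorem cf_sub_one_two_eq {y : ℚ} (hy : 1 < |y|) (q : ℚ) :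
    q - 1 + 1 / (2 + 1 / (y - 1)) = q + 1 / (-2 + 1 / y) := by
  have hy0 : y ≠ 0 := ne_of_one_lt_abs hy (by norm_num)
  have hy1 : y - 1 ≠ 0 := sub_ne_zero.mpr (ne_of_one_lt_abs hy (by norm_num))
  have hy2 : 2 * y - 1 ≠ 0 := by
    have := ne_of_one_lt_abs hy (c := 1 / 2) (by norm_num [abs_of_pos])
    contrapose! this
    linarith
  have h1 : (2 : ℚ) + 1 / (y - 1) = (2 * y - 1) / (y - 1) := by field_simp; ring
  have h2 : (-2 : ℚ) + 1 / y = -((2 * y - 1) / y) := by field_simp; ring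
  have h3 : (y - 1) / (2 * y - 1) + y / (2 * y - 1) = 1 := by
    rw [← add_div, div_eq_one_iff_eq hy2]; ring
  rw [h1, h2, one_div_div, one_div_neg_eq_neg_one_div, one_div_div]
  linarith

theorem E_gCF_of_two_le_abs_tail (u v : ℤ) (l : List ℤ) (hl : ∀ q ∈ l.tail, 2 ≤ |q|) :
    E (gCF u v l) = E l := by
  fun_induction gCF u v l with
  | case1 | case2 => rfl
  | case3 u v q0 q1 rest _ ih =>
    have hrest : ∀ q ∈ (((q1 + 1) :: rest).map (- ·)).tail, 2 ≤ |q| := fun q hq => by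
      obtain ⟨a, ha, rfl⟩ := List.mem_map.mp hq
      rw [abs_neg]
      exact hl a (List.mem_cons_of_mem _ ha)
    rw [E_oplus_pair, ih hrest, E_map_neg, E_cons_add, E_cons q0]
    push_cast
    exact cf_sub_one_one_neg_eq (one_lt_abs_E (List.cons_ne_nil q1 rest) hl) q0
  | case4 _ _ q0 _ _ hq1 =>
    obtain ⟨rfl, -⟩ := hq1
    norm_num [E]
    ring
  | case5 u v q0 _ _ hq1 p1 ps ih =>
    obtain ⟨rfl, -⟩ := hq1
    have hps : ∀ q ∈ p1 :: ps, 2 ≤ |q| := fun q hq => hl q (List.mem_cons_of_mem _ hq)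
    rw [E_oplus_pair, ih fun q hq => hps q (List.mem_cons_of_mem _ hq), E_cons_sub,
      E_cons q0, E_cons (-2)]
    push_cast
    exact cf_sub_one_two_eq (one_lt_abs_E (List.cons_ne_nil p1 ps) hps) q0
  | case6 u v q0 q1 rest _ _ ih =>
    rw [E_oplus_singleton, ih fun q hq => hl q (List.mem_cons_of_mem _ hq), E_cons q0]

theorem two_le_abs_of_mem_tail_of_memA2 {l : List ℤ} (hl : memA2 l) :
    ∀ q ∈ l.tail, 2 ≤ |q| := by
  obtain _ | ⟨a, t⟩ := l
  · simp
  intro q (hq : q ∈ t)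
  obtain ⟨i, hi, rfl⟩ := List.mem_iff_getElem.mp hq
  have := hl.2.1 (i + 1) i.succ_pos (by simpa using hi)
  rw [List.getD_cons_succ, List.getD_eq_getElem _ _ hi] at this
  omega

theorem E_gCF_general (u v : ℤ) (l : List ℤ) (hl : memA2 l) :
    E (gCF u v l) = E l :=
  E_gCF_of_two_le_abs_tail u v l (two_le_abs_of_mem_tail_of_memA2 hl)

/-- For `u, v ≥ 2` with `uv ≠ 4`, the function `g_{u,v}` preserves the evaluation
of every sequence in `A₂`. -/
theorem E_gCF (u v : ℤ) (hu : 2 ≤ u) (hv : 2 ≤ v) (huv : u * v ≠ 4)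
    (l : List ℤ) (hl : memA2 l) :
    E (gCF u v l) = E l :=
  E_gCF_general u v l hl
end

section
/- For integers u, v ≥ 2 with uv ≠ 4, the group generated by L_u = [[1,0],[u,1]] and R_v = [[1,v],[0,1]] is a proper subgroup of 𝒢_{u,v}; equivalently, there exists a matrix in 𝒢_{u,v} that is not a product of powers of L_u and R_v. -/
abbrev SL2 := Matrix.SpecialLinearGroup (Fin 2) ℤ

/-- `L_u = [[1,0],[u,1]]`. -/
def Lmat (u : ℤ) : SL2 :=
  ⟨!![1, 0; u, 1], by simp [Matrix.det_fin_two_of]⟩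

/-- `R_v = [[1,v],[0,1]]`. -/
def Rmat (v : ℤ) : SL2 :=
  ⟨!![1, v; 0, 1], by simp [Matrix.det_fin_two_of]⟩

/-- The set `𝒢_{u,v}`. -/
def Gscr (u v : ℤ) : Set SL2 :=
  {M | ∃ n1 n2 n3 n4 : ℤ,
    (M : Matrix (Fin 2) (Fin 2) ℤ) = !![1 + u*v*n1, v*n2; u*n3, 1 + u*v*n4]}

/-- The group `G_{u,v}` generated by `L_u` and `R_v`. -/
def Guv (u v : ℤ) : Subgroup SL2 := Subgroup.closure {Lmat u, Rmat v}

/-- Alternating product `R^{a₀} L^{a₁} R^{a₂} ⋯` from a list of exponents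
(the boolean records whether the next factor is a power of `R`). -/
def altProd (u v : ℤ) : Bool → List ℤ → SL2
  | _, [] => 1
  | true, a :: l => (Rmat v) ^ a * altProd u v false l
  | false, a :: l => (Lmat u) ^ a * altProd u v true l

/-!
Ping-pong on the first column `(a, c)` of `g ∈ G_{u,v}`. Write `g` as a reduced alternating word
in `L_u` and `R_v`. A nonzero power of `R_v` sends a column with `|a| < |c|` (in particular one with
`(u - 1)|a| < |c|`) or the column `(1, 0)` to one with `(v - 1)|c| < |a|`, and symmetrically for
`L_u`; so every `g ∈ G_{u,v}` satisfies one of the two strict inequalities. When `uv ≠ 4` one of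
`u, v` is at least `3`, and then `1 + t • !![1, -1; 1, -1]` with `t = ±uv` lies in `𝒢_{u,v}`
but its first column `(1 + t, t)` satisfies neither.
-/

section AltWord

variable {G : Type*} [Group G] (x y : G)

/-- `IsAltWord x y true g`: `g` is `1` or a reduced word `x^k₁ y^k₂ x^k₃ ⋯` (all `kᵢ ≠ 0`);
`IsAltWord x y false g`: the same with the roles of `x` and `y` exchanged. -/
inductive IsAltWord : Bool → G → Prop
  | one (s : Bool) : IsAltWord s 1
  | zpow_mul {g : G} (s : Bool) (k : ℤ) (hk : k ≠ 0) :
      IsAltWord (!s) g → IsAltWord s (cond s x y ^ k * g)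

variable {x y}

theorem IsAltWord.exists_zpow_mul_of_not {t : Bool} {g : G} (hg : IsAltWord x y (!t) g) (k : ℤ) :
    ∃ r, IsAltWord x y r (cond t x y ^ k * g) := by
  rcases eq_or_ne k 0 with rfl | hk
  · exact ⟨!t, by simpa using hg⟩
  · exact ⟨t, .zpow_mul t k hk hg⟩

theorem IsAltWord.exists_zpow_mul {s : Bool} {g : G} (hg : IsAltWord x y s g) (t : Bool) (k : ℤ) :
    ∃ r, IsAltWord x y r (cond t x y ^ k * g) := by
  cases hg with
  | one s => exact (IsAltWord.one (!t)).exists_zpow_mul_of_not k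
  | zpow_mul s j hj hg' =>
    rcases Bool.eq_or_eq_not s t with rfl | rfl
    · rw [← mul_assoc, ← zpow_add]
      rcases eq_or_ne (k + j) 0 with hkj | hkj
      · exact ⟨!s, by simpa [hkj] using hg'⟩
      · exact ⟨s, .zpow_mul s _ hkj hg'⟩
    · exact (IsAltWord.zpow_mul _ j hj hg').exists_zpow_mul_of_not k

theorem exists_isAltWord_of_mem_closure {g : G} (hg : g ∈ Subgroup.closure {x, y}) :
    ∃ s, IsAltWord x y s g := by
  induction hg using Subgroup.closure_induction_left with
  | one => exact ⟨true, .one true⟩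
  | mul_left a ha g _ ih =>
    obtain ⟨s, hs⟩ := ih
    rcases ha with rfl | rfl
    · simpa using hs.exists_zpow_mul true 1
    · simpa using hs.exists_zpow_mul false 1
  | inv_mul_cancel a ha g _ ih =>
    obtain ⟨s, hs⟩ := ih
    rcases ha with rfl | rfl
    · simpa using hs.exists_zpow_mul true (-1)
    · simpa using hs.exists_zpow_mul false (-1)

theorem zpow_eq_of_map_add (f : ℤ → G) (hf : ∀ a b, f (a + b) = f a * f b) (a k : ℤ) :
    f a ^ k = f (k * a) := by
  let φ : Multiplicative ℤ →* G := MonoidHom.mk' (fun n => f n.toAdd) fun _ _ => hf _ _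
  simpa [φ] using (map_zpow φ (.ofAdd a) k).symm

end AltWord

local notation:1024 "↑ₘ" A:1024 => ((A : SL2) : Matrix (Fin 2) (Fin 2) ℤ)

theorem Lmat_add (a b : ℤ) : Lmat (a + b) = Lmat a * Lmat b := by
  ext i j
  rw [Matrix.SpecialLinearGroup.coe_mul]
  fin_cases i <;> fin_cases j <;> simp [Lmat, Matrix.mul_apply, Fin.sum_univ_two]

theorem Rmat_add (a b : ℤ) : Rmat (a + b) = Rmat a * Rmat b := by
  ext i j
  rw [Matrix.SpecialLinearGroup.coe_mul]
  fin_cases i <;> fin_cases j <;> simp [Rmat, Matrix.mul_apply, Fin.sum_univ_two, add_comm]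

theorem Lmat_zpow (u k : ℤ) : Lmat u ^ k = Lmat (k * u) := zpow_eq_of_map_add _ Lmat_add u k

theorem Rmat_zpow (v k : ℤ) : Rmat v ^ k = Rmat (k * v) := zpow_eq_of_map_add _ Rmat_add v k

@[simp]
theorem Lmat_mul_apply_zero (w : ℤ) (g : SL2) (j : Fin 2) : ↑ₘ(Lmat w * g) 0 j = ↑ₘg 0 j := by
  rw [Matrix.SpecialLinearGroup.coe_mul]
  simp [Lmat, Matrix.mul_apply, Fin.sum_univ_two]

@[simp]
theorem Lmat_mul_apply_one (w : ℤ) (g : SL2) (j : Fin 2) :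
    ↑ₘ(Lmat w * g) 1 j = ↑ₘg 1 j + w * ↑ₘg 0 j := by
  rw [Matrix.SpecialLinearGroup.coe_mul]
  simp [Lmat, Matrix.mul_apply, Fin.sum_univ_two, add_comm]

@[simp]
theorem Rmat_mul_apply_zero (w : ℤ) (g : SL2) (j : Fin 2) :
    ↑ₘ(Rmat w * g) 0 j = ↑ₘg 0 j + w * ↑ₘg 1 j := by
  rw [Matrix.SpecialLinearGroup.coe_mul]
  simp [Rmat, Matrix.mul_apply, Fin.sum_univ_two]

@[simp]
theorem Rmat_mul_apply_one (w : ℤ) (g : SL2) (j : Fin 2) : ↑ₘ(Rmat w * g) 1 j = ↑ₘg 1 j := by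
  rw [Matrix.SpecialLinearGroup.coe_mul]
  simp [Rmat, Matrix.mul_apply, Fin.sum_univ_two]

theorem lt_abs_add_mul {m x y : ℤ} (hm : 1 ≤ m) (hxy : m * |x| < |y|) (n : ℤ) {k : ℤ} (hk : k ≠ 0) :
    (n - 1) * |y| < |x + k * n * y| := by
  have hkny : |n| * |y| ≤ |k * n * y| := by
    rw [abs_mul, abs_mul, mul_assoc]
    exact le_mul_of_one_le_left (by positivity) (Int.one_le_abs hk)
  have htri : |k * n * y| ≤ |x + k * n * y| + |x| := by
    simpa using abs_sub (x + k * n * y) x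
  nlinarith [le_abs_self n, abs_nonneg x, abs_nonneg y]

theorem IsAltWord.pingPong {u v : ℤ} (hu : 2 ≤ u) (hv : 2 ≤ v) {s : Bool} {g : SL2}
    (h : IsAltWord (Lmat u) (Rmat v) s g) :
    if s then (u - 1) * |↑ₘg 0 0| < |↑ₘg 1 0| ∨ ↑ₘg 0 0 = 1 ∧ ↑ₘg 1 0 = 0
    else (v - 1) * |↑ₘg 1 0| < |↑ₘg 0 0| := by
  induction h with
  | one s => cases s <;> simp
  | zpow_mul s k hk _ ih =>
    cases s
    · simp only [cond_false, Bool.not_false, if_true, Rmat_zpow, Rmat_mul_apply_zero,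
        Rmat_mul_apply_one] at ih ⊢
      rcases ih with h | ⟨h0, h1⟩
      · exact lt_abs_add_mul (by linarith) h v hk
      · simp [h0, h1]
    · simp only [cond_true, Bool.not_true, if_true, Lmat_zpow, Lmat_mul_apply_zero,
        Lmat_mul_apply_one] at ih ⊢
      exact .inl (lt_abs_add_mul (by linarith) ih u hk)

theorem abs_lt_of_mem_Guv {u v : ℤ} (hu : 2 ≤ u) (hv : 2 ≤ v) {g : SL2} (hg : g ∈ Guv u v) :
    (v - 1) * |↑ₘg 1 0| < |↑ₘg 0 0| ∨ (u - 1) * |↑ₘg 0 0| < |↑ₘg 1 0| := by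
  obtain ⟨s, hs⟩ := exists_isAltWord_of_mem_closure hg
  have h := hs.pingPong hu hv
  cases s
  · exact .inl h
  · rcases h with h | ⟨h0, h1⟩
    · exact .inr h
    · simp [h0, h1]

def Umat (t : ℤ) : SL2 :=
  ⟨!![1 + t, -t; t, 1 - t], by simp [Matrix.det_fin_two_of]; ring⟩

theorem Umat_mem_Gscr (u v s : ℤ) : Umat (s * u * v) ∈ Gscr u v :=
  ⟨s, -(s * u), s * v, -s, by ext i j; fin_cases i <;> fin_cases j <;> simp [Umat] <;> ring⟩

theorem Umat_notMem_Guv {u v t : ℤ} (hu : 2 ≤ u) (hv : 2 ≤ v)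
    (h₁ : |1 + t| ≤ (v - 1) * |t|) (h₂ : |t| ≤ (u - 1) * |1 + t|) : Umat t ∉ Guv u v := by
  intro hmem
  rcases abs_lt_of_mem_Guv hu hv hmem with h | h <;> simp [Umat] at h <;> linarith

/-- For `u, v ≥ 2` with `uv ≠ 4`, the group `G_{u,v}` is a proper subgroup of
`𝒢_{u,v}`. -/
theorem Guv_proper (u v : ℤ) (hu : 2 ≤ u) (hv : 2 ≤ v) (huv : u * v ≠ 4) :
    ∃ M : SL2, M ∈ Gscr u v ∧ M ∉ Guv u v := by
  have huv0 : 0 < u * v := by positivity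
  have h3 : 3 ≤ u ∨ 3 ≤ v := by
    by_contra! h
    exact huv (by rw [show u = 2 by omega, show v = 2 by omega]; norm_num)
  rcases h3 with hu3 | hv3
  · refine ⟨Umat (-1 * u * v), Umat_mem_Gscr u v (-1), Umat_notMem_Guv hu hv ?_ ?_⟩ <;>
      rw [abs_of_neg (by nlinarith), abs_of_neg (by nlinarith)] <;> nlinarith
  · refine ⟨Umat (1 * u * v), Umat_mem_Gscr u v 1, Umat_notMem_Guv hu hv ?_ ?_⟩ <;>
      rw [abs_of_pos (by nlinarith), abs_of_pos (by nlinarith)] <;> nlinarith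
end
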